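/- Let f : R^n → R^m be C¹ with Df L-Lipschitz, and consider N prediction steps. Re-linearizing the model at each predicted point q_{k+1} = q_k + Δq_k (as in the low-level MPC) gives cumulative prediction error at step N bounded by (L/2)Σ_{k} ‖Δq_k‖², whereas holding the linearization fixed at q_0 (as in the high-level MPC) gives error bounded by L Σ_k ‖q_k − q_0‖·‖Δq_k‖ + (L/2)Σ_k ‖Δq_k‖²; in particular, when all steps have size δ, the re-linearized bound is (L/2)Nδ² while the fixed-linearization bound grows like (L/2)N²δ². -/

import Mathlib

open Finset

lemma taylor_quad {E F : Type*} [NormedAddCommGroup E] [NormedSpace ℝ E]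
    [NormedAddCommGroup F] [NormedSpace ℝ F]
    {f : E → F} (hf : Differentiable ℝ f) {L : ℝ}
    (hL : ∀ x y, ‖fderiv ℝ f x - fderiv ℝ f y‖ ≤ L * ‖x - y‖)
    (x h : E) : ‖f (x + h) - f x - fderiv ℝ f x h‖ ≤ L / 2 * ‖h‖ ^ 2 := by
  set g : ℝ → F := fun t => f (x + t • h) - f x - t • fderiv ℝ f x h with hg
  have hgd : ∀ t : ℝ, HasDerivAt g (fderiv ℝ f (x + t • h) h - fderiv ℝ f x h) t := by
    intro t
    have h1 : HasDerivAt (fun t : ℝ => x + t • h) h t := by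
      simpa using ((hasDerivAt_id t).smul_const h).const_add x
    have h2 : HasDerivAt (fun t : ℝ => f (x + t • h)) (fderiv ℝ f (x + t • h) h) t :=
      ((hf (x + t • h)).hasFDerivAt).comp_hasDerivAt t h1
    exact (h2.sub_const (f x)).sub (by simpa using (hasDerivAt_id t).smul_const (fderiv ℝ f x h))
  have key : ∀ t ∈ Set.Icc (0:ℝ) 1, ‖g t‖ ≤ L * ‖h‖ ^ 2 / 2 * t ^ 2 := by
    refine image_norm_le_of_norm_deriv_right_le_deriv_boundary (a := 0) (b := 1)
      (f' := fun t => fderiv ℝ f (x + t • h) h - fderiv ℝ f x h)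
      (B := fun t => L * ‖h‖ ^ 2 / 2 * t ^ 2)
      (B' := fun t => L * ‖h‖ ^ 2 * t) ?_ ?_ ?_ ?_ ?_
    · exact fun t _ => (hgd t).continuousAt.continuousWithinAt
    · exact fun t _ => (hgd t).hasDerivWithinAt
    · simp [hg]
    · intro t
      have : HasDerivAt (fun t : ℝ => L * ‖h‖ ^ 2 / 2 * t ^ 2) (L * ‖h‖ ^ 2 / 2 * (2 * t)) t := by
        simpa using (hasDerivAt_pow 2 t).const_mul (L * ‖h‖ ^ 2 / 2)
      convert this using 1; ring
    · intro t ht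
      calc ‖fderiv ℝ f (x + t • h) h - fderiv ℝ f x h‖
          = ‖(fderiv ℝ f (x + t • h) - fderiv ℝ f x) h‖ := by simp
        _ ≤ ‖fderiv ℝ f (x + t • h) - fderiv ℝ f x‖ * ‖h‖ :=
            ContinuousLinearMap.le_opNorm _ _
        _ ≤ L * ‖x + t • h - x‖ * ‖h‖ := by
            gcongr; exact_mod_cast hL _ _
        _ = L * ‖h‖ ^ 2 * t := by
            simp [norm_smul, abs_of_nonneg ht.1]; ring
  have h1 := key 1 (by norm_num)
  have : ‖f (x + h) - f x - fderiv ℝ f x h‖ ≤ L * ‖h‖ ^ 2 / 2 := by simpa [hg] using h1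
  linarith

/-- Cumulative prediction error over an `N`-step horizon: re-linearizing at
each predicted point gives error `(L/2) Σ ‖Δq_k‖²`, whereas a fixed
linearization at `q 0` gives error `L Σ ‖q_k − q_0‖‖Δq_k‖ + (L/2) Σ ‖Δq_k‖²`;
in particular, when all steps have size at most `δ`, the re-linearized bound
is `(L/2) N δ²` while the fixed-linearization bound is `(L/2) N² δ²`. -/
theorem horizon_prediction_error {n m : ℕ}
    (f : EuclideanSpace ℝ (Fin n) → EuclideanSpace ℝ (Fin m))
    (hf : ContDiff ℝ 1 f) (L : ℝ) (hL0 : 0 ≤ L)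
    (hL : ∀ x y, ‖fderiv ℝ f x - fderiv ℝ f y‖ ≤ L * ‖x - y‖)
    (q : ℕ → EuclideanSpace ℝ (Fin n)) (Δq : ℕ → EuclideanSpace ℝ (Fin n))
    (hq : ∀ k, q (k + 1) = q k + Δq k) (N : ℕ) :
    ‖f (q N) - (f (q 0) + ∑ k ∈ range N, fderiv ℝ f (q k) (Δq k))‖ ≤
      (L / 2) * ∑ k ∈ range N, ‖Δq k‖ ^ 2 ∧
    ‖f (q N) - (f (q 0) + ∑ k ∈ range N, fderiv ℝ f (q 0) (Δq k))‖ ≤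
      L * ∑ k ∈ range N, ‖q k - q 0‖ * ‖Δq k‖ +
        (L / 2) * ∑ k ∈ range N, ‖Δq k‖ ^ 2 ∧
    ∀ δ : ℝ, (∀ k < N, ‖Δq k‖ ≤ δ) →
      ‖f (q N) - (f (q 0) + ∑ k ∈ range N, fderiv ℝ f (q k) (Δq k))‖ ≤
        (L / 2) * N * δ ^ 2 ∧
      ‖f (q N) - (f (q 0) + ∑ k ∈ range N, fderiv ℝ f (q 0) (Δq k))‖ ≤
        (L / 2) * N ^ 2 * δ ^ 2 := by
  have hdiff : Differentiable ℝ f := hf.differentiable one_ne_zero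
  have taylor : ∀ k, ‖f (q (k+1)) - f (q k) - fderiv ℝ f (q k) (Δq k)‖ ≤
      L / 2 * ‖Δq k‖ ^ 2 := by
    intro k
    rw [hq k]
    exact taylor_quad hdiff hL (q k) (Δq k)
  -- Part 1
  have part1 : ∀ M : ℕ, ‖f (q M) - (f (q 0) + ∑ k ∈ range M, fderiv ℝ f (q k) (Δq k))‖ ≤
      (L / 2) * ∑ k ∈ range M, ‖Δq k‖ ^ 2 := by
    intro M
    induction M with
    | zero => simp
    | succ M ih =>
      rw [Finset.sum_range_succ, Finset.sum_range_succ]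
      have heq : f (q (M+1)) - (f (q 0) + (∑ k ∈ range M, fderiv ℝ f (q k) (Δq k) +
          fderiv ℝ f (q M) (Δq M))) =
          (f (q M) - (f (q 0) + ∑ k ∈ range M, fderiv ℝ f (q k) (Δq k))) +
          (f (q (M+1)) - f (q M) - fderiv ℝ f (q M) (Δq M)) := by abel
      rw [heq, mul_add]
      exact (norm_add_le _ _).trans (add_le_add ih (taylor M))
  -- Part 2
  have part2 : ∀ M : ℕ, ‖f (q M) - (f (q 0) + ∑ k ∈ range M, fderiv ℝ f (q 0) (Δq k))‖ ≤
      L * ∑ k ∈ range M, ‖q k - q 0‖ * ‖Δq k‖ + (L / 2) * ∑ k ∈ range M, ‖Δq k‖ ^ 2 := by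
    intro M
    induction M with
    | zero => simp
    | succ M ih =>
      simp only [Finset.sum_range_succ]
      have heq : f (q (M+1)) - (f (q 0) + (∑ k ∈ range M, fderiv ℝ f (q 0) (Δq k) +
          fderiv ℝ f (q 0) (Δq M))) =
          ((f (q M) - (f (q 0) + ∑ k ∈ range M, fderiv ℝ f (q 0) (Δq k))) +
          (f (q (M+1)) - f (q M) - fderiv ℝ f (q M) (Δq M))) +
          ((fderiv ℝ f (q M) - fderiv ℝ f (q 0)) (Δq M)) := by
        simp only [ContinuousLinearMap.sub_apply]; abel
      have hcross : ‖(fderiv ℝ f (q M) - fderiv ℝ f (q 0)) (Δq M)‖ ≤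
          L * (‖q M - q 0‖ * ‖Δq M‖) := by
        calc ‖(fderiv ℝ f (q M) - fderiv ℝ f (q 0)) (Δq M)‖
            ≤ ‖fderiv ℝ f (q M) - fderiv ℝ f (q 0)‖ * ‖Δq M‖ :=
              ContinuousLinearMap.le_opNorm _ _
          _ ≤ L * ‖q M - q 0‖ * ‖Δq M‖ := by gcongr; exact hL _ _
          _ = L * (‖q M - q 0‖ * ‖Δq M‖) := by ring
      rw [heq]
      calc ‖_ + _‖ ≤ (L * ∑ k ∈ range M, ‖q k - q 0‖ * ‖Δq k‖ +
            (L / 2) * ∑ k ∈ range M, ‖Δq k‖ ^ 2 + L / 2 * ‖Δq M‖ ^ 2) +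
            L * (‖q M - q 0‖ * ‖Δq M‖) := by
            refine (norm_add_le _ _).trans (add_le_add ?_ hcross)
            exact (norm_add_le _ _).trans (add_le_add ih (taylor M))
        _ = L * (∑ k ∈ range M, ‖q k - q 0‖ * ‖Δq k‖ + ‖q M - q 0‖ * ‖Δq M‖) +
            (L / 2) * (∑ k ∈ range M, ‖Δq k‖ ^ 2 + ‖Δq M‖ ^ 2) := by ring
  refine ⟨part1 N, part2 N, ?_⟩
  intro δ hδ
  rcases Nat.eq_zero_or_pos N with hN | hN
  · subst hN; simp
  have hδ0 : 0 ≤ δ := le_trans (norm_nonneg _) (hδ 0 hN)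
  -- q k - q 0 is a telescoping sum
  have htel : ∀ k : ℕ, q k - q 0 = ∑ j ∈ range k, Δq j := by
    intro k
    induction k with
    | zero => simp
    | succ k ih => rw [Finset.sum_range_succ, ← ih, hq k]; abel
  have hqk : ∀ k, k < N → ‖q k - q 0‖ ≤ k * δ := by
    intro k hk
    rw [htel k]
    calc ‖∑ j ∈ range k, Δq j‖ ≤ ∑ j ∈ range k, ‖Δq j‖ := norm_sum_le _ _
      _ ≤ ∑ j ∈ range k, δ := by
          refine Finset.sum_le_sum fun j hj => hδ j (lt_of_lt_of_le (mem_range.mp hj) hk.le)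
      _ = k * δ := by simp [mul_comm]
  have hsq : ∑ k ∈ range N, ‖Δq k‖ ^ 2 ≤ N * δ ^ 2 := by
    calc ∑ k ∈ range N, ‖Δq k‖ ^ 2 ≤ ∑ k ∈ range N, δ ^ 2 := by
          refine Finset.sum_le_sum fun k hk => ?_
          exact pow_le_pow_left₀ (norm_nonneg _) (hδ k (mem_range.mp hk)) 2
      _ = N * δ ^ 2 := by simp [mul_comm]
  constructor
  · calc ‖f (q N) - (f (q 0) + ∑ k ∈ range N, fderiv ℝ f (q k) (Δq k))‖
        ≤ (L / 2) * ∑ k ∈ range N, ‖Δq k‖ ^ 2 := part1 N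
      _ ≤ (L / 2) * (N * δ ^ 2) := mul_le_mul_of_nonneg_left hsq (by linarith)
      _ = (L / 2) * N * δ ^ 2 := by ring
  · have hmix : ∑ k ∈ range N, ‖q k - q 0‖ * ‖Δq k‖ ≤ (N * (N - 1) / 2) * δ ^ 2 := by
      calc ∑ k ∈ range N, ‖q k - q 0‖ * ‖Δq k‖ ≤ ∑ k ∈ range N, (k * δ) * δ := by
            refine Finset.sum_le_sum fun k hk => ?_
            have hk' := mem_range.mp hk
            exact mul_le_mul (hqk k hk') (hδ k hk') (norm_nonneg _)
              (mul_nonneg (Nat.cast_nonneg _) hδ0)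
        _ = (∑ k ∈ range N, (k : ℝ)) * δ ^ 2 := by rw [Finset.sum_mul]; exact Finset.sum_congr rfl fun k _ => by ring
        _ = (N * (N - 1) / 2) * δ ^ 2 := by
            congr 1
            have := Finset.sum_range_id_mul_two N
            have hcast : ((∑ i ∈ range N, i : ℕ) : ℝ) * 2 = (N : ℝ) * ((N : ℝ) - 1) := by
              rw [← Nat.cast_ofNat, ← Nat.cast_mul, this]
              push_cast [Nat.cast_sub hN]
              ring
            push_cast at hcast ⊢
            linarith
    calc ‖f (q N) - (f (q 0) + ∑ k ∈ range N, fderiv ℝ f (q 0) (Δq k))‖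
          ≤ L * ∑ k ∈ range N, ‖q k - q 0‖ * ‖Δq k‖ +
            (L / 2) * ∑ k ∈ range N, ‖Δq k‖ ^ 2 := part2 N
        _ ≤ L * ((N * (N - 1) / 2) * δ ^ 2) + (L / 2) * (N * δ ^ 2) := by gcongr
        _ = (L / 2) * (N : ℝ) ^ 2 * δ ^ 2 := by ring
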